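/- Let (X_i)_{i∈ℤ} be a stationary process over a countable alphabet and define the context length I_k := min{i : log i ≥ H_∞(X₁^k | X_{k+1}^{k+i})}. Then log(I_k - 1) - H₀(X_i) ≤ H_∞(X₁^k | X_{k+1}^{k+I_k}) ≤ log I_k, where H₀(X_i) is the Hartley entropy of a single symbol. -/

import Mathlib

open MeasureTheory ProbabilityTheory Filter Set
open scoped ENNReal NNReal

/-- The Hilberg exponent of a sequence of reals. -/
noncomputable def hilberg (a : ℕ → ℝ) : ℝ :=
  Filter.limsup (fun k => max 0 (Real.log (a k) / Real.log k)) Filter.atTop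

/-- The recurrence time `R⁽¹⁾_k`: the first position `i ≥ 1` such that
`X_{i+1}^{i+k} = X_1^k`, or `∞` if there is none. -/
noncomputable def recTime {Ω A : Type*} (X : ℤ → Ω → A) (k : ℕ) (ω : Ω) : ℕ∞ :=
  sInf {e : ℕ∞ | ∃ i : ℕ, e = (i : ℕ∞) ∧ 1 ≤ i ∧
    ∀ m : ℕ, m < k → X ((i : ℤ) + 1 + (m : ℤ)) ω = X (1 + (m : ℤ)) ω}

/-- The repetition time `R⁽²⁾_k`: the first position `i ≥ 1` such that
`X_{i+1}^{i+k} = X_{j+1}^{j+k}` for some `0 ≤ j < i`, or `∞` if there is none. -/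
noncomputable def repTime {Ω A : Type*} (X : ℤ → Ω → A) (k : ℕ) (ω : Ω) : ℕ∞ :=
  sInf {e : ℕ∞ | ∃ i : ℕ, e = (i : ℕ∞) ∧ 1 ≤ i ∧ ∃ j : ℕ, j < i ∧
    ∀ m : ℕ, m < k → X ((i : ℤ) + 1 + (m : ℤ)) ω = X ((j : ℤ) + 1 + (m : ℤ)) ω}

/-- The longest match length `L⁽¹⁾_n`. -/
noncomputable def matchLen {Ω A : Type*} (X : ℤ → Ω → A) (n : ℕ) (ω : Ω) : ℕ :=
  sSup ({0} ∪ {k : ℕ | 1 ≤ k ∧ ∃ i : ℕ, 0 < i ∧ i + k ≤ n ∧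
    ∀ m : ℕ, m < k → X ((i : ℤ) + 1 + (m : ℤ)) ω = X (1 + (m : ℤ)) ω})

/-- The maximal repetition length `L⁽²⁾_n`. -/
noncomputable def repLen {Ω A : Type*} (X : ℤ → Ω → A) (n : ℕ) (ω : Ω) : ℕ :=
  sSup ({0} ∪ {k : ℕ | 1 ≤ k ∧ ∃ i j : ℕ, j < i ∧ i + k ≤ n ∧
    ∀ m : ℕ, m < k → X ((i : ℤ) + 1 + (m : ℤ)) ω = X ((j : ℤ) + 1 + (m : ℤ)) ω})

/-- `P(X_1^k)` evaluated at the realized block: the probability that a fresh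
sample agrees with `ω` on coordinates `1,…,k`. -/
noncomputable def blockProb {Ω A : Type*} [MeasurableSpace Ω] (μ : Measure Ω)
    (X : ℤ → Ω → A) (k : ℕ) (ω : Ω) : ℝ :=
  (μ {ω' | ∀ m : ℕ, m < k → X (1 + (m : ℤ)) ω' = X (1 + (m : ℤ)) ω}).toReal

/-- The Shannon entropy `H₁(X_1^k) = E[-log P(X_1^k)]`. -/
noncomputable def shannonEnt {Ω A : Type*} [MeasurableSpace Ω] (μ : Measure Ω)
    (X : ℤ → Ω → A) (k : ℕ) : ℝ :=
  ∫ ω, -Real.log (blockProb μ X k ω) ∂μ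

/-- The σ-algebra generated by the future coordinates `X_j, X_{j+1}, …`. -/
def futureSigma {Ω A : Type*} [MeasurableSpace A] (X : ℤ → Ω → A) (j : ℤ) :
    MeasurableSpace Ω :=
  ⨆ i : {i : ℤ // j ≤ i}, MeasurableSpace.comap (X i) inferInstance

/-- `P(X_1^k | X_j^∞)` evaluated at the realized block: the conditional probability,
given the σ-algebra of the future `X_j^∞`, of the block `X_1^k`, evaluated at the
realized value of `X_1^k`. -/
noncomputable def condBlockProb {Ω A : Type*} [MeasurableSpace Ω] [MeasurableSpace A]
    (μ : Measure Ω) (X : ℤ → Ω → A) (k : ℕ) (j : ℤ) (ω : Ω) : ℝ :=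
  ∑' x : Fin k → A,
    ({ω'' | ∀ m : Fin k, X (1 + (m : ℤ)) ω'' = x m}.indicator (fun _ => (1 : ℝ)) ω) *
      (μ[({ω' | ∀ m : Fin k, X (1 + (m : ℤ)) ω' = x m}.indicator fun _ => (1 : ℝ)) |
        futureSigma X j]) ω

/-- The min-entropy `H_∞(X_1^k) = -log max_x P(X_1^k = x)`. -/
noncomputable def minEntropy {Ω A : Type*} [MeasurableSpace Ω] (μ : Measure Ω)
    (X : ℤ → Ω → A) (k : ℕ) : ℝ :=
  -Real.log (⨆ x : Fin k → A, (μ {ω | ∀ m : Fin k, X (1 + (m : ℤ)) ω = x m}).toReal)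

/-- The conditional min-entropy `H_∞(X_1^k | X_{k+1}^{k+i}) = -log E[max_x P(X_1^k = x | X_{k+1}^{k+i})]`,
written as `-log ∑_y max_x P(X_1^k = x, X_{k+1}^{k+i} = y)`. -/
noncomputable def condMinEntropy {Ω A : Type*} [MeasurableSpace Ω] (μ : Measure Ω)
    (X : ℤ → Ω → A) (k i : ℕ) : ℝ :=
  -Real.log (∑' y : Fin i → A, ⨆ x : Fin k → A,
    (μ {ω | (∀ m : Fin k, X (1 + (m : ℤ)) ω = x m) ∧
      ∀ m : Fin i, X ((k : ℤ) + 1 + (m : ℤ)) ω = y m}).toReal)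

/-- The context length `I_k := min {i ≥ 1 : log i ≥ H_∞(X_1^k | X_{k+1}^{k+i})}`. -/
noncomputable def contextLen {Ω A : Type*} [MeasurableSpace Ω] (μ : Measure Ω)
    (X : ℤ → Ω → A) (k : ℕ) : ℕ :=
  sInf {i : ℕ | 1 ≤ i ∧ condMinEntropy μ X k i ≤ Real.log i}

/-- The weighted conditional entropy
`H_•(X_1^k | X_{k+1}^∞) := -log ∑_{i=1}^∞ e^{-H_∞(X_1^k|X_{k+1}^{k+i})}/(i(i+1))`. -/
noncomputable def weightedCondEntropy {Ω A : Type*} [MeasurableSpace Ω] (μ : Measure Ω)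
    (X : ℤ → Ω → A) (k : ℕ) : ℝ :=
  -Real.log (∑' i : ℕ,
    Real.exp (-condMinEntropy μ X k (i + 1)) / ((i + 1) * (i + 2)))

/-- The median of a real random variable: `sup {r : P(X < r) ≤ 1/2}`. -/
noncomputable def medianOf {Ω : Type*} [MeasurableSpace Ω] (μ : Measure Ω) (f : Ω → ℝ) : ℝ :=
  sSup {r : ℝ | (μ {ω | f ω < r}).toReal ≤ 1 / 2}


/-!
Write `q_i := E[max_x P(X₁^k = x | X_{k+1}^{k+i})]`, so that
`H_∞(X₁^k | X_{k+1}^{k+i}) = -log q_i` and `I_k = min {i ≥ 1 : i q_i ≥ 1}`. Since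
`q_i ≥ max_x P(X₁^k = x) > 0` for every `i`, the defining condition eventually holds, which gives
the upper bound. Conditioning on one more symbol multiplies the guessing probability by at most
the number of values that symbol takes, which by stationarity is the support size `N` of `X_j`:
`q_{i+1} ≤ N q_i`. Minimality of `I_k` gives `(I_k - 1) q_{I_k - 1} < 1`, hence
`(I_k - 1) q_{I_k} ≤ N`, the lower bound.
-/

section GuessProb

variable {Ω α β γ : Type*} [MeasurableSpace Ω] (μ : Measure Ω)

/-- `E[max_x P(U = x | V)]`, the probability of guessing `U` correctly from `V`. -/
noncomputable def guessProb (U : Ω → α) (V : Ω → β) : ℝ≥0∞ :=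
  ∑' y, ⨆ x, μ (U ⁻¹' {x} ∩ V ⁻¹' {y})

lemma guessProb_le_one [IsProbabilityMeasure μ] [MeasurableSpace β] [MeasurableSingletonClass β]
    [Countable β] (U : Ω → α) {V : Ω → β} (hV : Measurable V) : guessProb μ U V ≤ 1 :=
  calc guessProb μ U V ≤ ∑' y, μ (V ⁻¹' {y}) :=
        ENNReal.tsum_le_tsum fun y => iSup_le fun x => measure_mono inter_subset_right
    _ = ∑' y : (univ : Set β), μ (V ⁻¹' {y.1}) := (tsum_univ _).symm
    _ = 1 := by
        rw [tsum_measure_preimage_singleton countable_univ fun y _ =>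
          hV (measurableSet_singleton y), preimage_univ, measure_univ]

lemma guessProb_ne_top [IsProbabilityMeasure μ] [MeasurableSpace β] [MeasurableSingletonClass β]
    [Countable β] (U : Ω → α) {V : Ω → β} (hV : Measurable V) : guessProb μ U V ≠ ⊤ :=
  ((guessProb_le_one μ U hV).trans_lt ENNReal.one_lt_top).ne

lemma measure_preimage_singleton_le_guessProb [Countable β] (U : Ω → α) (V : Ω → β) (x : α) :
    μ (U ⁻¹' {x}) ≤ guessProb μ U V :=
  calc μ (U ⁻¹' {x}) = μ (⋃ y, U ⁻¹' {x} ∩ V ⁻¹' {y}) := by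
        rw [← inter_iUnion, ← preimage_iUnion, iUnion_of_singleton, preimage_univ, inter_univ]
    _ ≤ ∑' y, μ (U ⁻¹' {x} ∩ V ⁻¹' {y}) := measure_iUnion_le _
    _ ≤ guessProb μ U V := ENNReal.tsum_le_tsum fun y => le_iSup (fun x => μ _) x

lemma guessProb_equiv_comp {δ : Type*} (U : Ω → α) (V : Ω → β) (e : β ≃ δ) :
    guessProb μ U (e ∘ V) = guessProb μ U V := by
  rw [guessProb, guessProb, ← e.tsum_eq]
  refine tsum_congr fun y => iSup_congr fun x => ?_
  congr 2
  ext ω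
  simp

lemma guessProb_prodMk_le (U : Ω → α) (V : Ω → β) (W : Ω → γ) :
    guessProb μ U (fun ω => (V ω, W ω)) ≤
      ({c | μ (W ⁻¹' {c}) ≠ 0}.encard : ℝ≥0∞) * guessProb μ U V := by
  set S := {c | μ (W ⁻¹' {c}) ≠ 0}
  have hfiber : ∀ y c, ⨆ x, μ (U ⁻¹' {x} ∩ (fun ω => (V ω, W ω)) ⁻¹' {(y, c)}) ≤
      S.indicator (fun _ => ⨆ x, μ (U ⁻¹' {x} ∩ V ⁻¹' {y})) c := by
    intro y c
    have hsub : ∀ x, U ⁻¹' {x} ∩ (fun ω => (V ω, W ω)) ⁻¹' {(y, c)} ⊆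
        (U ⁻¹' {x} ∩ V ⁻¹' {y}) ∩ W ⁻¹' {c} := fun x ω ⟨hx, hyc⟩ =>
      ⟨⟨hx, congrArg Prod.fst hyc⟩, congrArg Prod.snd hyc⟩
    by_cases hc : c ∈ S
    · rw [indicator_of_mem hc]
      exact iSup_mono fun x => measure_mono ((hsub x).trans inter_subset_left)
    · rw [indicator_of_notMem hc]
      refine iSup_le fun x =>
        le_of_le_of_eq (measure_mono ((hsub x).trans inter_subset_right)) ?_
      simpa [S] using hc
  calc guessProb μ U (fun ω => (V ω, W ω))
      ≤ ∑' (y) (c), S.indicator (fun _ => ⨆ x, μ (U ⁻¹' {x} ∩ V ⁻¹' {y})) c := by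
        rw [guessProb, ENNReal.tsum_prod']
        exact ENNReal.tsum_le_tsum fun y => ENNReal.tsum_le_tsum fun c => hfiber y c
    _ = ∑' y, (S.encard : ℝ≥0∞) * ⨆ x, μ (U ⁻¹' {x} ∩ V ⁻¹' {y}) := by
        simp only [← tsum_subtype, ENNReal.tsum_set_const]
    _ = (S.encard : ℝ≥0∞) * guessProb μ U V := ENNReal.tsum_mul_left

lemma guessProb_pos [IsProbabilityMeasure μ] [Countable α] [Countable β] (U : Ω → α)
    (V : Ω → β) : 0 < guessProb μ U V := by
  obtain ⟨x, hx⟩ : ∃ x, 0 < μ (U ⁻¹' {x}) :=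
    exists_measure_pos_of_not_measure_iUnion_null
      (by simp [← preimage_iUnion, iUnion_of_singleton])
  exact hx.trans_le (measure_preimage_singleton_le_guessProb μ U V x)

end GuessProb

section Blocks

variable {Ω A : Type*} (X : ℤ → Ω → A)

/-- `block X s n` is `X_s^{s+n-1}`. -/
def block (s : ℤ) (n : ℕ) (ω : Ω) : Fin n → A := fun m => X (s + m) ω

lemma block_succ (s : ℤ) (n : ℕ) :
    block X s (n + 1) = ((Equiv.prodComm _ _).trans (Fin.snocEquiv fun _ => A)) ∘
      fun ω => (block X s n ω, X (s + n) ω) := by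
  funext ω m
  refine Fin.lastCases ?_ (fun m => ?_) m <;> simp [block]

variable [MeasurableSpace Ω] (μ : Measure Ω)

lemma measurable_block [MeasurableSpace A] (hX : ∀ i, Measurable (X i)) (s : ℤ) (n : ℕ) :
    Measurable (block X s n) :=
  measurable_pi_lambda _ fun _ => hX _

lemma guessProb_block_succ_le {α : Type*} (U : Ω → α) (s : ℤ) (n : ℕ) :
    guessProb μ U (block X s (n + 1)) ≤
      ({a | μ (X (s + n) ⁻¹' {a}) ≠ 0}.encard : ℝ≥0∞) * guessProb μ U (block X s n) := by
  rw [block_succ, guessProb_equiv_comp]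
  exact guessProb_prodMk_le μ U _ _

lemma measure_preimage_eq_of_measurePreserving [MeasurableSpace A]
    (hX : ∀ i, Measurable (X i)) {T : Ω → Ω} (hT : MeasurePreserving T μ μ)
    (hshift : ∀ i ω, X i (T ω) = X (i + 1) ω) {s : Set A} (hs : MeasurableSet s) (n m : ℤ) :
    μ (X n ⁻¹' s) = μ (X m ⁻¹' s) := by
  have hsucc : ∀ n, μ (X (n + 1) ⁻¹' s) = μ (X n ⁻¹' s) := fun n => by
    rw [← hT.measure_preimage (hX n hs).nullMeasurableSet]
    congr 1
    ext ω
    simp [hshift]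
  have hzero : ∀ n, μ (X n ⁻¹' s) = μ (X 0 ⁻¹' s) := fun n => by
    induction n using Int.induction_on with
    | zero => rfl
    | succ n ih => rw [hsucc, ih]
    | pred n ih => rw [← ih, ← hsucc, sub_add_cancel]
  rw [hzero n, hzero m]

lemma condMinEntropy_eq_neg_log_guessProb [IsFiniteMeasure μ] (k i : ℕ) :
    condMinEntropy μ X k i =
      -Real.log (guessProb μ (block X 1 k) (block X (k + 1) i)).toReal := by
  rw [condMinEntropy, guessProb,
    ENNReal.tsum_toReal_eq fun y => ne_top_of_le_ne_top (measure_ne_top μ univ)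
      (iSup_le fun x => measure_mono (subset_univ _))]
  congr 2
  refine tsum_congr fun y => ?_
  rw [ENNReal.toReal_iSup fun x => measure_ne_top μ _]
  refine iSup_congr fun x => ?_
  congr 2
  ext ω
  simp [block, funext_iff]

variable [MeasurableSpace A] [MeasurableSingletonClass A] [Countable A] [IsProbabilityMeasure μ]
  {X}

lemma ofReal_exp_condMinEntropy (hX : ∀ i, Measurable (X i)) (k i : ℕ) :
    ENNReal.ofReal (Real.exp (condMinEntropy μ X k i)) =
      (guessProb μ (block X 1 k) (block X (k + 1) i))⁻¹ := by
  have hne_top := guessProb_ne_top μ (block X 1 k) (measurable_block X hX (k + 1) i)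
  have hpos : 0 < (guessProb μ (block X 1 k) (block X (k + 1) i)).toReal :=
    ENNReal.toReal_pos (guessProb_pos μ _ _).ne' hne_top
  rw [condMinEntropy_eq_neg_log_guessProb, Real.exp_neg, Real.exp_log hpos,
    ENNReal.ofReal_inv_of_pos hpos, ENNReal.ofReal_toReal hne_top]

lemma condMinEntropy_le_log_iff (hX : ∀ i, Measurable (X i)) (k : ℕ) {i : ℕ} (hi : 1 ≤ i) :
    condMinEntropy μ X k i ≤ Real.log i ↔
      1 ≤ (i : ℝ≥0∞) * guessProb μ (block X 1 k) (block X (k + 1) i) := by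
  rw [Real.le_log_iff_exp_le (by exact_mod_cast hi),
    ← ENNReal.ofReal_le_ofReal_iff (by positivity), ofReal_exp_condMinEntropy μ hX,
    ENNReal.ofReal_natCast, mul_comm, ENNReal.inv_le_iff_le_mul (fun _ => (guessProb_pos μ _ _).ne')
      (fun _ => Nat.cast_ne_zero.2 (by omega))]

lemma contextLen_mem (hX : ∀ i, Measurable (X i)) (k : ℕ) :
    1 ≤ contextLen μ X k ∧
      condMinEntropy μ X k (contextLen μ X k) ≤ Real.log (contextLen μ X k) := by
  obtain ⟨x, hx⟩ : ∃ x, 0 < μ (block X 1 k ⁻¹' {x}) :=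
    exists_measure_pos_of_not_measure_iUnion_null
      (by simp [← preimage_iUnion, iUnion_of_singleton])
  obtain ⟨n, hn⟩ := ENNReal.exists_nat_mul_gt hx.ne' ENNReal.one_ne_top
  have hn1 : 1 ≤ n := Nat.one_le_iff_ne_zero.2 fun h => by simp [h] at hn
  have hlog : condMinEntropy μ X k n ≤ Real.log n := (condMinEntropy_le_log_iff μ hX k hn1).2 <|
    hn.le.trans (by gcongr; exact measure_preimage_singleton_le_guessProb μ _ _ x)
  exact Nat.sInf_mem (s := {i | 1 ≤ i ∧ condMinEntropy μ X k i ≤ Real.log i}) ⟨n, hn1, hlog⟩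

lemma natCast_mul_guessProb_le_one_of_lt_contextLen (hX : ∀ i, Measurable (X i)) (k : ℕ) {i : ℕ}
    (hi : i < contextLen μ X k) :
    (i : ℝ≥0∞) * guessProb μ (block X 1 k) (block X (k + 1) i) ≤ 1 := by
  rcases Nat.eq_zero_or_pos i with rfl | hi0
  · simp
  by_contra h
  exact Nat.notMem_of_lt_sInf hi ⟨hi0, (condMinEntropy_le_log_iff μ hX k hi0).2 (not_le.1 h).le⟩

end Blocks

/-- The bound `log (I_k - 1) - H₀(X_j) ≤ H_∞(…)` is stated in exponentiated form, which stays
meaningful when the support of `X_j` is infinite. -/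
theorem condMinEntropy_contextLen_general {Ω A : Type*} [MeasurableSpace Ω] [MeasurableSpace A]
    [MeasurableSingletonClass A] [Countable A]
    (μ : Measure Ω) [IsProbabilityMeasure μ] (X : ℤ → Ω → A) (hXmeas : ∀ i, Measurable (X i))
    (T : Ω → Ω) (hT : MeasurePreserving T μ μ) (hshift : ∀ i ω, X i (T ω) = X (i + 1) ω)
    (k : ℕ) (j : ℤ) :
    (((contextLen μ X k - 1 : ℕ) : ℝ≥0∞)
      ≤ ENNReal.ofReal (Real.exp (condMinEntropy μ X k (contextLen μ X k)))
          * (({a : A | μ {ω | X j ω = a} ≠ 0}.encard : ℕ∞) : ℝ≥0∞)) ∧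
    condMinEntropy μ X k (contextLen μ X k) ≤ Real.log (contextLen μ X k) := by
  obtain ⟨hI, hlog⟩ := contextLen_mem μ hXmeas k
  refine ⟨?_, hlog⟩
  set I := contextLen μ X k
  set Q := fun i => guessProb μ (block X 1 k) (block X (k + 1) i)
  set N : ℝ≥0∞ := (({a : A | μ {ω | X j ω = a} ≠ 0}.encard : ℕ∞) : ℝ≥0∞)
  have hstep : Q I ≤ N * Q (I - 1) := by
    have h := guessProb_block_succ_le X μ (block X 1 k) (k + 1) (I - 1)
    have hsupp :
        {a | μ (X (k + 1 + (I - 1 : ℕ)) ⁻¹' {a}) ≠ 0} = {a | μ {ω | X j ω = a} ≠ 0} :=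
      Set.ext fun a => not_congr <| by
        rw [measure_preimage_eq_of_measurePreserving X μ hXmeas hT hshift
          (measurableSet_singleton a) _ j]
        rfl
    rwa [Nat.sub_add_cancel hI, hsupp] at h
  have hprev : ((I - 1 : ℕ) : ℝ≥0∞) * Q (I - 1) ≤ 1 :=
    natCast_mul_guessProb_le_one_of_lt_contextLen μ hXmeas k (by omega)
  rw [ofReal_exp_condMinEntropy μ hXmeas, ← ENNReal.div_eq_inv_mul,
    ENNReal.le_div_iff_mul_le (Or.inl (guessProb_pos μ _ _).ne')
      (Or.inl (guessProb_ne_top μ _ (measurable_block X hXmeas _ _)))]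
  calc ((I - 1 : ℕ) : ℝ≥0∞) * Q I ≤ ((I - 1 : ℕ) : ℝ≥0∞) * (N * Q (I - 1)) := by gcongr
    _ = N * (((I - 1 : ℕ) : ℝ≥0∞) * Q (I - 1)) := by ring
    _ ≤ N := mul_le_of_le_one_right' hprev

/-- For a stationary process over a countable alphabet, the context length `I_k` satisfies
`log (I_k - 1) - H₀(X_j) ≤ H_∞(X₁^k | X_{k+1}^{k+I_k}) ≤ log I_k`, where `H₀(X_j)` is the
Hartley entropy of a single symbol.  The left inequality is stated in the equivalent
exponentiated form `I_k - 1 ≤ e^{H_∞(X₁^k|X_{k+1}^{k+I_k})} · card {a : P(X_j = a) > 0}`,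
which is also meaningful when the support of a single symbol is infinite. -/
theorem condMinEntropy_contextLen {Ω A : Type*} [MeasurableSpace Ω] [MeasurableSpace A]
    [MeasurableSingletonClass A] [Countable A]
    (μ : Measure Ω) [IsProbabilityMeasure μ] (X : ℤ → Ω → A) (hXmeas : ∀ i, Measurable (X i))
    (T : Ω → Ω) (hT : MeasurePreserving T μ μ) (hshift : ∀ i ω, X i (T ω) = X (i + 1) ω)
    (k : ℕ) (hk : 1 ≤ k) (j : ℤ) :
    (((contextLen μ X k - 1 : ℕ) : ℝ≥0∞)
      ≤ ENNReal.ofReal (Real.exp (condMinEntropy μ X k (contextLen μ X k)))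
          * (({a : A | μ {ω | X j ω = a} ≠ 0}.encard : ℕ∞) : ℝ≥0∞)) ∧
    condMinEntropy μ X k (contextLen μ X k) ≤ Real.log (contextLen μ X k) :=
  condMinEntropy_contextLen_general μ X hXmeas T hT hshift k j
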